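/- If sup_{x ∈ B_ρ(0)} ∫_{ℝ^d} (1 ∧ |y|²) k_s(x,x+y) dy < ∞ for every ρ > 0, then the discretized conductances satisfy limsup_n sup_{a ∈ B_ρ(0) ∩ (1/n)ℤ^d} Σ_{b ∈ (1/n)ℤ^d} (1 ∧ |b|²) C^{n,p}_s(a,a+b) < ∞ for every ρ > 0 and 0 < p ≤ 1. -/

import Mathlib

open MeasureTheory Filter Topology
open scoped ENNReal NNReal Pointwise

noncomputable section

abbrev Eucl (d : ℕ) := EuclideanSpace ℝ (Fin d)

/-- The point of `ℝ^d` corresponding to the lattice point `a/n`, `a ∈ ℤ^d`. -/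
def latticePt (d n : ℕ) (a : Fin d → ℤ) : Eucl d := WithLp.toLp 2 (fun i => (a i : ℝ) / n)

/-- The half-open cube of side `1/n` centred at the lattice point `a/n`. -/
def cube (d n : ℕ) (a : Fin d → ℤ) : Set (Eucl d) :=
  {x | ∀ i, (a i : ℝ)/n - 1/(2*n) ≤ x i ∧ x i < (a i : ℝ)/n + 1/(2*n)}

/-- `[x]_n`: the index of the lattice point of `(1/n)ℤ^d` nearest to `x`. -/
def lattOf (d n : ℕ) (x : Eucl d) : Fin d → ℤ := fun i => ⌊n * x i + 1/2⌋

/-- The discretised conductances `C^{n,p}(a,b) = n^d ∫_{ā}∫_{b̄} k(x,y) dx dy` for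
`|a−b| > 2√d/n^p` and `0` otherwise (extended-real valued version). -/
def CnpE (d n : ℕ) (p : ℝ) (k : Eucl d → Eucl d → ℝ) (a b : Fin d → ℤ) : ℝ≥0∞ :=
  if ‖latticePt d n a - latticePt d n b‖ > 2 * Real.sqrt d / (n : ℝ) ^ p then
    (n : ℝ≥0∞) ^ d * ∫⁻ x in cube d n a, ∫⁻ y in cube d n b, ENNReal.ofReal (k x y)
  else 0

/-- Symmetric part of the discretised conductances. -/
def CnpEs (d n : ℕ) (p : ℝ) (k : Eucl d → Eucl d → ℝ) (a b : Fin d → ℤ) : ℝ≥0∞ :=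
  (CnpE d n p k a b + CnpE d n p k b a) / 2

/-! Each weighted term is at most `4 n^d ∫_{ā} ∫_{(a+b)‾} (1 ∧ |y - x|²) k_s(x, y) dy dx`: the
cut-off `|b| > 2√d/n^p ≥ 2√d/n` forces `|b| ≤ 2|y - x|` for `x, y` in the two cubes. The cubes
`(a+b)‾` tile `ℝ^d`, so the sum over `b` is at most `4 n^d ∫_{ā} ∫ (1 ∧ |y|²) k_s(x, x + y) dy dx`,
and `ā` lies in the ball of radius `ρ + √d` where the hypothesis bounds the inner integral. -/

section General

variable {α β : Type*} [MeasurableSpace α] [MeasurableSpace β]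

lemma lintegral_lintegral_const_mul {μ : Measure α} {ν : Measure β} {c : ℝ≥0∞} (hc : c ≠ ∞)
    (f : α → β → ℝ≥0∞) :
    ∫⁻ x, ∫⁻ y, c * f x y ∂ν ∂μ = c * ∫⁻ x, ∫⁻ y, f x y ∂ν ∂μ := by
  simp_rw [lintegral_const_mul' c _ hc]

lemma setLIntegral_setLIntegral_add_swap {μ : Measure α} [SFinite μ] {f : α → α → ℝ≥0∞}
    (hf : Measurable (Function.uncurry f)) (s t : Set α) :
    ∫⁻ x in s, ∫⁻ y in t, f x y ∂μ ∂μ + ∫⁻ x in t, ∫⁻ y in s, f x y ∂μ ∂μ =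
      ∫⁻ x in s, ∫⁻ y in t, (f x y + f y x) ∂μ ∂μ := by
  rw [lintegral_lintegral_swap (μ := μ.restrict t) hf.aemeasurable,
    ← lintegral_add_left (f := fun x => ∫⁻ y in t, f x y ∂μ) hf.lintegral_prod_right']
  refine lintegral_congr fun x => ?_
  exact (lintegral_add_left (hf.comp measurable_prodMk_left) _).symm

lemma norm_le_sqrt_card_mul_of_forall_abs_le {ι : Type*} [Fintype ι] {x : EuclideanSpace ℝ ι}
    {r : ℝ} (hr : 0 ≤ r) (hx : ∀ i, |x i| ≤ r) : ‖x‖ ≤ √(Fintype.card ι) * r := by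
  calc ‖x‖ = √(∑ i, |x i| ^ 2) := by simp [EuclideanSpace.norm_eq]
    _ ≤ √(∑ _i : ι, r ^ 2) := by gcongr with i; exact hx i
    _ = √(Fintype.card ι) * r := by simp [Real.sqrt_mul, hr]

lemma min_one_sq_le_four_mul {r s : ℝ} (hr : 0 ≤ r) (hrs : r ≤ 2 * s) :
    min 1 (r ^ 2) ≤ 4 * min 1 (s ^ 2) := by
  rcases le_total (s ^ 2) 1 with hs | hs
  · rw [min_eq_right hs]; exact (min_le_right _ _).trans (by nlinarith)
  · rw [min_eq_left hs]; linarith [min_le_left 1 (r ^ 2)]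

end General

section Lattice

variable {d n : ℕ}

lemma latticePt_add (a b : Fin d → ℤ) :
    latticePt d n (a + b) = latticePt d n a + latticePt d n b := by
  ext i
  simp [latticePt, add_div]

lemma norm_latticePt_sub_latticePt_add (a b : Fin d → ℤ) :
    ‖latticePt d n a - latticePt d n (a + b)‖ = ‖latticePt d n b‖ := by
  rw [latticePt_add, sub_add_cancel_left, norm_neg]

lemma cube_eq_preimage_pi (a : Fin d → ℤ) :
    cube d n a = (MeasurableEquiv.toLp 2 (Fin d → ℝ)).symm ⁻¹'
      Set.univ.pi fun i => Set.Ico ((a i : ℝ) / n - 1 / (2 * n)) ((a i : ℝ) / n + 1 / (2 * n)) := by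
  ext x
  simp [cube]

lemma measurableSet_cube (a : Fin d → ℤ) : MeasurableSet (cube d n a) := by
  rw [cube_eq_preimage_pi]
  exact (MeasurableEquiv.toLp 2 _).symm.measurable (.univ_pi fun _ => measurableSet_Ico)

lemma natCast_pow_mul_volume_cube (hn : n ≠ 0) (a : Fin d → ℤ) :
    (n : ℝ≥0∞) ^ d * volume (cube d n a) = 1 := by
  rw [cube_eq_preimage_pi, (EuclideanSpace.volume_preserving_symm_measurableEquiv_toLp
    (Fin d)).measure_preimage (MeasurableSet.univ_pi fun _ => measurableSet_Ico).nullMeasurableSet,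
    volume_pi_pi]
  have hside : ∀ c : ℝ, c / n + 1 / (2 * n) - (c / n - 1 / (2 * n)) = (n : ℝ)⁻¹ := fun c => by
    field_simp; ring
  simp only [Real.volume_Ico, hside, Finset.prod_const, Finset.card_univ, Fintype.card_fin,
    ← mul_pow, ENNReal.ofReal_inv_of_pos (Nat.cast_pos.2 (Nat.pos_of_ne_zero hn)),
    ENNReal.ofReal_natCast]
  rw [ENNReal.mul_inv_cancel (by exact_mod_cast hn) (ENNReal.natCast_ne_top n), one_pow]

lemma lattOf_eq_of_mem_cube (hn : n ≠ 0) {a : Fin d → ℤ} {x : Eucl d} (hx : x ∈ cube d n a) :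
    lattOf d n x = a := by
  have hn0 : (0 : ℝ) < n := Nat.cast_pos.2 (Nat.pos_of_ne_zero hn)
  funext i
  obtain ⟨hlo, hhi⟩ := hx i
  rw [show (a i : ℝ) / n - 1 / (2 * n) = (a i - 1 / 2) / n by field_simp, div_le_iff₀ hn0] at hlo
  rw [show (a i : ℝ) / n + 1 / (2 * n) = (a i + 1 / 2) / n by field_simp, lt_div_iff₀ hn0] at hhi
  exact Int.floor_eq_iff.2 ⟨by linarith, by linarith⟩

lemma pairwise_disjoint_cube (hn : n ≠ 0) : Pairwise (Function.onFun Disjoint (cube d n)) :=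
  fun _ _ hab => Set.disjoint_left.2 fun _ ha hb =>
    hab ((lattOf_eq_of_mem_cube hn ha).symm.trans (lattOf_eq_of_mem_cube hn hb))

lemma norm_sub_latticePt_le (hn : n ≠ 0) {a : Fin d → ℤ} {x : Eucl d} (hx : x ∈ cube d n a) :
    ‖x - latticePt d n a‖ ≤ √d / (2 * n) := by
  have hcoord : ∀ i, |(x - latticePt d n a) i| ≤ 1 / (2 * n) := fun i => by
    obtain ⟨hlo, hhi⟩ := hx i
    simp only [PiLp.sub_apply, latticePt, abs_le]
    constructor <;> linarith
  calc ‖x - latticePt d n a‖ ≤ √(Fintype.card (Fin d)) * (1 / (2 * n)) :=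
        norm_le_sqrt_card_mul_of_forall_abs_le (by positivity) hcoord
    _ = √d / (2 * n) := by rw [Fintype.card_fin, mul_one_div]

lemma norm_lt_of_mem_cube (hn : n ≠ 0) {a : Fin d → ℤ} {x : Eucl d} {ρ : ℝ}
    (ha : ‖latticePt d n a‖ < ρ) (hx : x ∈ cube d n a) : ‖x‖ < ρ + √d := by
  have hn1 : (1 : ℝ) ≤ n := Nat.one_le_cast.2 (Nat.one_le_iff_ne_zero.2 hn)
  have hhalf : √d / (2 * n) ≤ √d := div_le_self (Real.sqrt_nonneg _) (by linarith)
  linarith [norm_le_norm_add_norm_sub' x (latticePt d n a), norm_sub_latticePt_le hn hx]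

lemma norm_latticePt_le_two_mul_norm_sub (hn : n ≠ 0) {a b : Fin d → ℤ} {x y : Eucl d}
    (hb : 2 * √d / n < ‖latticePt d n b‖) (hx : x ∈ cube d n a) (hy : y ∈ cube d n (a + b)) :
    ‖latticePt d n b‖ ≤ 2 * ‖y - x‖ := by
  have hdecomp : latticePt d n b =
      (y - x) - (y - latticePt d n (a + b)) + (x - latticePt d n a) := by
    rw [latticePt_add]; abel
  have htri : ‖latticePt d n b‖ ≤
      ‖y - x‖ + ‖y - latticePt d n (a + b)‖ + ‖x - latticePt d n a‖ := by
    rw [hdecomp]; exact norm_add_le_of_le (norm_sub_le _ _) le_rfl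
  have hquarter : 2 * √d / n = 4 * (√d / (2 * n)) := by ring
  linarith [norm_sub_latticePt_le hn hx, norm_sub_latticePt_le hn hy]

lemma tsum_setLIntegral_cube_add_le (hn : n ≠ 0) (a : Fin d → ℤ) (f : Eucl d → ℝ≥0∞) :
    ∑' b, ∫⁻ y in cube d n (a + b), f y ≤ ∫⁻ y, f y := by
  rw [← lintegral_iUnion (fun _ => measurableSet_cube _)
    ((pairwise_disjoint_cube hn).comp_of_injective (add_right_injective a))]
  exact setLIntegral_le_lintegral _ _

end Lattice

section Conductance

variable {d n : ℕ} {p : ℝ} {k ks : Eucl d → Eucl d → ℝ}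

lemma CnpEs_eq (hk0 : ∀ x y, 0 ≤ k x y) (hkm : Measurable (Function.uncurry k))
    (hks : ∀ x y, ks x y = (k x y + k y x) / 2) (a b : Fin d → ℤ) :
    CnpEs d n p k a b =
      if ‖latticePt d n a - latticePt d n b‖ > 2 * √d / (n : ℝ) ^ p then
        (n : ℝ≥0∞) ^ d * ∫⁻ x in cube d n a, ∫⁻ y in cube d n b, ENNReal.ofReal (ks x y)
      else 0 := by
  have hofReal : ∀ x y, ENNReal.ofReal (ks x y) =
      2⁻¹ * (ENNReal.ofReal (k x y) + ENNReal.ofReal (k y x)) := fun x y => by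
    rw [hks, ← ENNReal.ofReal_add (hk0 x y) (hk0 y x), div_eq_inv_mul,
      ENNReal.ofReal_mul (by norm_num), ENNReal.ofReal_inv_of_pos two_pos, ENNReal.ofReal_ofNat]
  unfold CnpEs CnpE
  rw [norm_sub_rev (latticePt d n b)]
  split_ifs
  · simp_rw [hofReal, lintegral_lintegral_const_mul (ENNReal.inv_ne_top.2 two_ne_zero),
      ← setLIntegral_setLIntegral_add_swap (f := fun x y => ENNReal.ofReal (k x y))
        (ENNReal.measurable_ofReal.comp hkm), ← mul_add, ENNReal.div_eq_inv_mul]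
    ring
  · simp

lemma ofReal_min_one_sq_mul_CnpEs_le (hn : n ≠ 0) (hp1 : p ≤ 1) (hk0 : ∀ x y, 0 ≤ k x y)
    (hkm : Measurable (Function.uncurry k)) (hks : ∀ x y, ks x y = (k x y + k y x) / 2)
    (a b : Fin d → ℤ) :
    ENNReal.ofReal (min 1 (‖latticePt d n b‖ ^ 2)) * CnpEs d n p k a (a + b) ≤
      4 * ((n : ℝ≥0∞) ^ d * ∫⁻ x in cube d n a, ∫⁻ y in cube d n (a + b),
        ENNReal.ofReal (min 1 (‖y - x‖ ^ 2) * ks x y)) := by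
  rw [CnpEs_eq hk0 hkm hks, norm_latticePt_sub_latticePt_add]
  split_ifs with hfar
  swap
  · simp
  have hn1 : (1 : ℝ) ≤ n := Nat.one_le_cast.2 (Nat.one_le_iff_ne_zero.2 hn)
  have hb : 2 * √d / n < ‖latticePt d n b‖ :=
    lt_of_le_of_lt (div_le_div_of_nonneg_left (by positivity) (by positivity)
      (Real.rpow_le_self_of_one_le hn1 hp1)) hfar
  have hweight : ∀ x ∈ cube d n a, ∀ y ∈ cube d n (a + b),
      ENNReal.ofReal (min 1 (‖latticePt d n b‖ ^ 2)) * ENNReal.ofReal (ks x y) ≤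
        4 * ENNReal.ofReal (min 1 (‖y - x‖ ^ 2) * ks x y) := fun x hx y hy => by
    rw [ENNReal.ofReal_mul (by positivity), ← mul_assoc, ← ENNReal.ofReal_ofNat 4,
      ← ENNReal.ofReal_mul (p := 4) (by norm_num)]
    gcongr
    exact min_one_sq_le_four_mul (norm_nonneg _)
      (norm_latticePt_le_two_mul_norm_sub hn hb hx hy)
  rw [mul_left_comm, ← lintegral_lintegral_const_mul ENNReal.ofReal_ne_top, mul_left_comm,
    ← lintegral_lintegral_const_mul ENNReal.ofNat_ne_top]
  exact mul_le_mul_right (setLIntegral_mono' (measurableSet_cube a) fun x hx =>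
    setLIntegral_mono' (measurableSet_cube (a + b)) fun y hy => hweight x hx y hy) _

lemma tsum_ofReal_min_one_sq_mul_CnpEs_le (hn : n ≠ 0) (hp1 : p ≤ 1) (hk0 : ∀ x y, 0 ≤ k x y)
    (hkm : Measurable (Function.uncurry k)) (hks : ∀ x y, ks x y = (k x y + k y x) / 2)
    {M : ℝ≥0∞} (a : Fin d → ℤ)
    (hM : ∀ x ∈ cube d n a, ∫⁻ y, ENNReal.ofReal (min 1 (‖y‖ ^ 2) * ks x (x + y)) ≤ M) :
    ∑' b, ENNReal.ofReal (min 1 (‖latticePt d n b‖ ^ 2)) * CnpEs d n p k a (a + b) ≤ 4 * M := by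
  set g : Eucl d → Eucl d → ℝ≥0∞ := fun x y => ENNReal.ofReal (min 1 (‖y - x‖ ^ 2) * ks x y)
  have hksm : Measurable (Function.uncurry ks) := by
    obtain rfl : ks = fun x y => (k x y + k y x) / 2 := funext₂ hks
    exact (hkm.add (hkm.comp measurable_swap)).div_const 2
  have hgm : Measurable (Function.uncurry g) := by
    refine ENNReal.measurable_ofReal.comp (Measurable.mul ?_ hksm)
    fun_prop
  have hinner : ∀ x ∈ cube d n a, ∑' b, ∫⁻ y in cube d n (a + b), g x y ≤ M := fun x hx =>
    calc ∑' b, ∫⁻ y in cube d n (a + b), g x y ≤ ∫⁻ y, g x y :=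
          tsum_setLIntegral_cube_add_le hn a _
      _ = ∫⁻ y, g x (x + y) := (lintegral_add_left_eq_self _ x).symm
      _ ≤ M := by simpa [g] using hM x hx
  calc ∑' b, ENNReal.ofReal (min 1 (‖latticePt d n b‖ ^ 2)) * CnpEs d n p k a (a + b)
      ≤ ∑' b, 4 * ((n : ℝ≥0∞) ^ d * ∫⁻ x in cube d n a, ∫⁻ y in cube d n (a + b), g x y) :=
        ENNReal.tsum_le_tsum fun b => ofReal_min_one_sq_mul_CnpEs_le hn hp1 hk0 hkm hks a b
    _ = 4 * ((n : ℝ≥0∞) ^ d * ∫⁻ x in cube d n a, ∑' b, ∫⁻ y in cube d n (a + b), g x y) := by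
        rw [ENNReal.tsum_mul_left, ENNReal.tsum_mul_left,
          lintegral_tsum (f := fun b x => ∫⁻ y in cube d n (a + b), g x y)
            fun _ => hgm.lintegral_prod_right'.aemeasurable]
    _ ≤ 4 * ((n : ℝ≥0∞) ^ d * ∫⁻ _ in cube d n a, M) := by
        gcongr _ * (_ * ?_)
        exact setLIntegral_mono' (measurableSet_cube a) hinner
    _ = 4 * M := by
        rw [setLIntegral_const, mul_left_comm ((n : ℝ≥0∞) ^ d), natCast_pow_mul_volume_cube hn,
          mul_one]

end Conductance

theorem discretization_second_moment_bounded_general (d : ℕ) (p : ℝ) (hp1 : p ≤ 1)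
    (k : Eucl d → Eucl d → ℝ) (hk0 : ∀ x y, 0 ≤ k x y)
    (hkm : Measurable (Function.uncurry k))
    (ks : Eucl d → Eucl d → ℝ) (hks : ∀ x y, ks x y = (k x y + k y x) / 2)
    (hloc : ∀ ρ : ℝ, 0 < ρ → ∃ M : ℝ≥0∞, M < ∞ ∧
      ∀ x ∈ Metric.ball (0 : Eucl d) ρ,
        (∫⁻ y, ENNReal.ofReal (min 1 (‖y‖ ^ 2) * ks x (x + y))) ≤ M) :
    ∀ ρ : ℝ, 0 < ρ →
      limsup (fun n : ℕ =>
          ⨆ a ∈ {a : Fin d → ℤ | latticePt d n a ∈ Metric.ball (0 : Eucl d) ρ},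
            ∑' b : Fin d → ℤ,
              ENNReal.ofReal (min 1 (‖latticePt d n b‖ ^ 2)) * CnpEs d n p k a (a + b))
        atTop < ∞ := by
  intro ρ hρ
  obtain ⟨M, hM, hbound⟩ := hloc (ρ + √d) (by positivity)
  refine (limsup_le_of_le (by isBoundedDefault) ?_).trans_lt
    (ENNReal.mul_lt_top (by norm_num : (4 : ℝ≥0∞) < ∞) hM)
  filter_upwards [eventually_ne_atTop 0] with n hn
  exact iSup₂_le fun a ha => tsum_ofReal_min_one_sq_mul_CnpEs_le hn hp1 hk0 hkm hks a
    fun x hx => hbound x (mem_ball_zero_iff.2 (norm_lt_of_mem_cube hn (mem_ball_zero_iff.1 ha) hx))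

/-- If `sup_{x ∈ B_ρ(0)} ∫ (1 ∧ |y|²) k_s(x,x+y) dy < ∞` for all `ρ > 0`, then
`limsup_n sup_{a ∈ B_ρ(0)} ∑_b (1 ∧ |b|²) C^{n,p}_s(a,a+b) < ∞` for all `ρ > 0`. -/
theorem discretization_second_moment_bounded (d : ℕ) (p : ℝ) (hp : 0 < p) (hp1 : p ≤ 1)
    (k : Eucl d → Eucl d → ℝ) (hk0 : ∀ x y, 0 ≤ k x y)
    (hkm : Measurable (Function.uncurry k))
    (ks : Eucl d → Eucl d → ℝ) (hks : ∀ x y, ks x y = (k x y + k y x) / 2)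
    (hloc : ∀ ρ : ℝ, 0 < ρ → ∃ M : ℝ≥0∞, M < ∞ ∧
      ∀ x ∈ Metric.ball (0 : Eucl d) ρ,
        (∫⁻ y, ENNReal.ofReal (min 1 (‖y‖ ^ 2) * ks x (x + y))) ≤ M) :
    ∀ ρ : ℝ, 0 < ρ →
      limsup (fun n : ℕ =>
          ⨆ a ∈ {a : Fin d → ℤ | latticePt d n a ∈ Metric.ball (0 : Eucl d) ρ},
            ∑' b : Fin d → ℤ,
              ENNReal.ofReal (min 1 (‖latticePt d n b‖ ^ 2)) * CnpEs d n p k a (a + b))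
        atTop < ∞ :=
  discretization_second_moment_bounded_general d p hp1 k hk0 hkm ks hks hloc
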